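/- arXiv:2006.03703 — 2 statements merged into one kernel-verified Lean document; each statement's English description precedes it below -/
import Mathlib

section
/- For every integer r ≥ 1, the number of edges of the circus tent graph CT(r,r) equals r^4/2 - r^3 + r^2/2 + 2r - 1. -/
/-- Edge `ij` (with `i < j`) of the circus tent graph `CT(r,s)`. -/
def ctEdge (r s i j : ℕ) : Prop :=
  (∃ k ∈ Finset.Icc 1 s,
      (k ≤ i ∧ i < j ∧ j ≤ k * r - r + 2) ∨
      (r * s - k * r + r ≤ i ∧ i < j ∧ j ≤ r * s + 2 - k)) ∨
  (∃ k ∈ Finset.Icc 1 r,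
      (k ≤ i ∧ i < j ∧ j ≤ k * s - s + 2) ∨
      (r * s - k * s + s ≤ i ∧ i < j ∧ j ≤ r * s + 2 - k))

instance (r s i j : ℕ) : Decidable (ctEdge r s i j) := by
  unfold ctEdge; infer_instance

/-- The edge set of `CT(r,s)`, as a finset of pairs `(i,j)` with `i < j`. -/
def ctEdges (r s : ℕ) : Finset (ℕ × ℕ) :=
  (Finset.Icc 1 (r * s + 1) ×ˢ Finset.Icc 1 (r * s + 1)).filter
    fun p => ctEdge r s p.1 p.2

def ctA (r i : ℕ) : ℕ := (min i r - 1) * r + 2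
def ctB (r i : ℕ) : ℕ := if r ≤ i then min (r*r+1) (r*r+1 - r + i / r) else 0
def ctM (r i : ℕ) : ℕ := max (ctA r i) (ctB r i)

lemma ctEdge_iff (r i j : ℕ) (hr : 1 ≤ r) (hi : 1 ≤ i) :
    ctEdge r r i j ↔ i < j ∧ j ≤ ctM r i := by
  constructor
  · intro h
    replace h : ∃ k ∈ Finset.Icc 1 r,
        (k ≤ i ∧ i < j ∧ j ≤ k * r - r + 2) ∨
        (r * r - k * r + r ≤ i ∧ i < j ∧ j ≤ r * r + 2 - k) := by
      rcases h with h | h <;> exact h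
    obtain ⟨k, hk, h | h⟩ := h <;>
      simp only [Finset.mem_Icc] at hk <;>
      obtain ⟨hk1, hk2⟩ := hk <;>
      obtain ⟨h1, h2, h3⟩ := h <;>
      refine ⟨h2, ?_⟩
    · -- bottom case : k ≤ i, j ≤ k*r - r + 2
      refine le_max_of_le_left ?_
      have hmin : k ≤ min i r := le_min h1 hk2
      have hmul : (k - 1) * r ≤ (min i r - 1) * r :=
        Nat.mul_le_mul_right _ (by omega)
      have hsub : (k - 1) * r = k * r - r := by rw [Nat.sub_one_mul]
      simp only [ctA]
      omega
    · -- top case : r*r - k*r + r ≤ i, j ≤ r*r + 2 - k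
      refine le_max_of_le_right ?_
      have hkr : k * r ≤ r * r := Nat.mul_le_mul_right _ hk2
      have hrr : 1 * r ≤ k * r := Nat.mul_le_mul_right _ hk1
      have hri : r ≤ i := by omega
      have hsm : (r - k) * r = r * r - k * r := Nat.sub_mul r k r
      have hdiv : r - k + 1 ≤ i / r := by
        rw [Nat.le_div_iff_mul_le (by omega : 0 < r)]
        have : (r - k + 1) * r = (r - k) * r + 1 * r := by rw [Nat.add_mul]
        omega
      simp only [ctB, if_pos hri, le_min_iff]
      omega
  · rintro ⟨hij, hM⟩
    left
    rcases le_max_iff.mp hM with hA | hB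
    · refine ⟨min i r, Finset.mem_Icc.mpr ⟨le_min hi hr, min_le_right _ _⟩,
        Or.inl ⟨min_le_left _ _, hij, ?_⟩⟩
      simp only [ctA] at hA
      have hsub : (min i r - 1) * r = min i r * r - r := by rw [Nat.sub_one_mul]
      have h1 : 1 * r ≤ min i r * r := Nat.mul_le_mul_right _ (le_min hi hr)
      omega
    · by_cases hri : r ≤ i
      · simp only [ctB, if_pos hri, le_min_iff] at hB
        obtain ⟨hB1, hB2⟩ := hB
        have hq1 : 1 ≤ i / r := (Nat.one_le_div_iff (by omega)).mpr hri
        have hqr : i / r * r ≤ i := Nat.div_mul_le_self i r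
        by_cases hqR : r ≤ i / r
        · refine ⟨1, Finset.mem_Icc.mpr ⟨le_refl 1, hr⟩, Or.inr ⟨?_, hij, ?_⟩⟩
          · have : r * r ≤ i / r * r := Nat.mul_le_mul_right _ hqR
            omega
          · omega
        · refine ⟨r + 1 - i / r, Finset.mem_Icc.mpr ⟨by omega, by omega⟩,
            Or.inr ⟨?_, hij, ?_⟩⟩
          · have e1 : (r + 1 - i / r) * r = (r - i / r) * r + 1 * r := by
              rw [← Nat.add_mul]; congr 1; omega
            have e2 : (r - i / r) * r = r * r - i / r * r := Nat.sub_mul _ _ _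
            have e3 : i / r * r ≤ r * r := Nat.mul_le_mul_right _ (by omega)
            have e4 : 1 * r ≤ i / r * r := Nat.mul_le_mul_right _ hq1
            omega
          · omega
      · simp only [ctB, if_neg hri] at hB
        omega

lemma ctM_le (r i : ℕ) (hr : 1 ≤ r) : ctM r i ≤ r * r + 1 := by
  apply max_le
  · simp only [ctA]
    have h1 : (min i r - 1) * r ≤ (r - 1) * r :=
      Nat.mul_le_mul_right _ (by have := min_le_right i r; omega)
    have h2 : (r - 1) * r = r * r - r := by rw [Nat.sub_one_mul]
    have h3 : 1 * r ≤ r * r := Nat.mul_le_mul_right _ hr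
    omega
  · simp only [ctB]
    split
    · exact min_le_left _ _
    · omega

lemma ctM_ge (r i : ℕ) (hr : 1 ≤ r) (hi : 1 ≤ i) (hin : i ≤ r * r + 1) :
    i ≤ ctM r i := by
  by_cases hri : r ≤ i
  · refine le_max_of_le_right ?_
    simp only [ctB, if_pos hri, le_min_iff]
    refine ⟨hin, ?_⟩
    have hdm : i / r * r + i % r = i := Nat.div_add_mod' i r
    have hmod : i % r < r := Nat.mod_lt i (by omega)
    by_cases hq : i / r ≤ r - 1
    · have h2 : (r - 1) * r = r * r - r := by rw [Nat.sub_one_mul]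
      have h4 : i / r * (r - 1) ≤ (r - 1) * (r - 1) := Nat.mul_le_mul_right _ hq
      have h5 : i / r * (r - 1) + i / r = i / r * r := by
        rw [← Nat.mul_succ]; congr 1; omega
      have h6 : (r - 1) * (r - 1) + (r - 1) = (r - 1) * r := by
        rw [← Nat.mul_succ]; congr 1; omega
      omega
    · have h1 : r * r ≤ i / r * r := Nat.mul_le_mul_right _ (by omega)
      omega
  · refine le_max_of_le_left ?_
    simp only [ctA, min_eq_left (le_of_not_ge hri)]
    have h1 : (i - 1) * 1 ≤ (i - 1) * r := Nat.mul_le_mul_left _ hr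
    omega

lemma sum_Icc_cast (m : ℕ) :
    ∑ i ∈ Finset.Icc 1 m, (i : ℚ) = m * (m + 1) / 2 := by
  induction m with
  | zero => simp
  | succ n ih =>
    rw [Finset.sum_Icc_succ_top (by omega), ih]
    push_cast
    ring

lemma sum_div_mul (r a : ℕ) (hr : 1 ≤ r) :
    (∑ i ∈ Finset.range (a * r), i / r) * 2 = r * (a * (a - 1)) := by
  induction a with
  | zero => simp
  | succ n ih =>
    rw [show (n + 1) * r = n * r + r by ring, Finset.sum_range_add]
    have hc : ∀ x ∈ Finset.range r, (n * r + x) / r = n := by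
      intro x hx
      rw [Nat.add_comm, Nat.add_mul_div_right _ _ (by omega : 0 < r),
        Nat.div_eq_of_lt (Finset.mem_range.mp hx)]
      omega
    rw [Finset.sum_congr rfl hc, Finset.sum_const, Finset.card_range, smul_eq_mul]
    have key : r * ((n + 1) * (n + 1 - 1)) = r * (n * (n - 1)) + 2 * (r * n) := by
      cases n with
      | zero => simp
      | succ m => simp only [Nat.add_sub_cancel]; ring
    omega

lemma card_eq_sum (r : ℕ) (hr : 1 ≤ r) :
    (ctEdges r r).card = ∑ i ∈ Finset.Icc 1 (r * r + 1), (ctM r i - i) := by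
  rw [ctEdges, Finset.card_filter, Finset.sum_product]
  apply Finset.sum_congr rfl
  intro i hi
  obtain ⟨hi1, hi2⟩ := Finset.mem_Icc.mp hi
  rw [← Finset.card_filter]
  have hset : (Finset.Icc 1 (r * r + 1)).filter (fun j => ctEdge r r i j)
      = Finset.Ioc i (ctM r i) := by
    ext j
    simp only [Finset.mem_filter, Finset.mem_Icc, Finset.mem_Ioc,
      ctEdge_iff r i j hr hi1]
    constructor
    · rintro ⟨_, h3, h4⟩; exact ⟨h3, h4⟩
    · rintro ⟨h3, h4⟩
      exact ⟨⟨by omega, le_trans h4 (ctM_le r i hr)⟩, h3, h4⟩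
  rw [hset, Nat.card_Ioc]

lemma ctM_low (r i : ℕ) (hr : 1 ≤ r) (h1 : 1 ≤ i) (h2 : i < r) :
    ctM r i = (i - 1) * r + 2 := by
  have hB : ctB r i = 0 := by simp only [ctB, if_neg (by omega : ¬ r ≤ i)]
  rw [ctM, hB, Nat.max_zero, ctA, min_eq_left (by omega)]

lemma ctM_mid (r i : ℕ) (hr : 1 ≤ r) (h1 : r ≤ i) (h2 : i ≤ r * r) :
    ctM r i = r * r + 1 - r + i / r := by
  have hq1 : 1 ≤ i / r := (Nat.one_le_div_iff (by omega)).mpr h1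
  have hqr : i / r ≤ r := by
    have := Nat.div_le_div_right (c := r) h2
    rwa [Nat.mul_div_cancel _ (by omega : 0 < r)] at this
  have h3 : 1 * r ≤ r * r := Nat.mul_le_mul_right _ hr
  have hB : ctB r i = r * r + 1 - r + i / r := by
    simp only [ctB, if_pos h1]
    exact min_eq_right (by omega)
  have hA : ctA r i = (r - 1) * r + 2 := by
    rw [ctA, min_eq_right h1]
  rw [ctM, hA, hB]
  apply max_eq_right
  have h4 : (r - 1) * r = r * r - r := by rw [Nat.sub_one_mul]
  omega

lemma ctM_top (r : ℕ) (hr : 1 ≤ r) : ctM r (r * r + 1) = r * r + 1 :=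
  le_antisymm (ctM_le r _ hr) (ctM_ge r _ hr (by omega) le_rfl)

lemma sum_div_Ico (r : ℕ) (hr : 1 ≤ r) :
    (∑ i ∈ Finset.Ico r (r * r + 1), i / r) * 2 = r * (r * (r - 1)) + 2 * r := by
  have hrr : 1 * r ≤ r * r := Nat.mul_le_mul_right _ hr
  have h0 : ∑ i ∈ Finset.Ico 0 r, i / r = 0 :=
    Finset.sum_eq_zero fun i hi =>
      Nat.div_eq_of_lt (Finset.mem_Ico.mp hi).2
  have hsplit := Finset.sum_Ico_consecutive (fun i => i / r)
    (Nat.zero_le r) (by omega : r ≤ r * r + 1)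
  have hrange : Finset.Ico 0 (r * r + 1) = Finset.range (r * r + 1) :=
    by rw [Finset.range_eq_Ico]
  have hlast : ∑ i ∈ Finset.range (r * r + 1), i / r
      = ∑ i ∈ Finset.range (r * r), i / r + r := by
    rw [Finset.sum_range_succ, Nat.mul_div_cancel _ (by omega : 0 < r)]
  have hmain := sum_div_mul r r hr
  simp only [hrange, hlast, h0, zero_add] at hsplit
  omega

/-- `|E(CT(r,r))| = r⁴/2 - r³ + r²/2 + 2r - 1`. -/
theorem card_ctEdges_diagonal (r : ℕ) (hr : 1 ≤ r) :
    ((ctEdges r r).card : ℚ) =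
      (r : ℚ) ^ 4 / 2 - (r : ℚ) ^ 3 + (r : ℚ) ^ 2 / 2 + 2 * (r : ℚ) - 1 := by
  have hrr : 1 * r ≤ r * r := Nat.mul_le_mul_right _ hr
  have hcast : ((ctEdges r r).card : ℚ)
      = ∑ i ∈ Finset.Icc 1 (r * r + 1), ((ctM r i : ℚ) - i) := by
    rw [card_eq_sum r hr, Nat.cast_sum]
    refine Finset.sum_congr rfl fun i hi => ?_
    obtain ⟨h1, h2⟩ := Finset.mem_Icc.mp hi
    rw [Nat.cast_sub (ctM_ge r i hr h1 h2)]
  rw [hcast]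
  have hIcc : Finset.Icc 1 (r * r + 1) = Finset.Ico 1 (r * r + 2) := by
    rw [← Finset.Ico_add_one_right_eq_Icc]
    rfl
  rw [hIcc,
    ← Finset.sum_Ico_consecutive (fun i => ((ctM r i : ℚ) - i))
      (by omega : 1 ≤ r) (by omega : r ≤ r * r + 2),
    ← Finset.sum_Ico_consecutive (fun i => ((ctM r i : ℚ) - i))
      (by omega : r ≤ r * r + 1) (by omega : r * r + 1 ≤ r * r + 2)]
  -- last piece is zero
  have hS3 : ∑ i ∈ Finset.Ico (r * r + 1) (r * r + 2), ((ctM r i : ℚ) - i) = 0 := by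
    rw [show r * r + 2 = (r * r + 1) + 1 from rfl, Nat.Ico_succ_singleton,
      Finset.sum_singleton, ctM_top r hr, sub_self]
  rw [hS3, add_zero]
  -- first piece
  have hS1 : ∑ i ∈ Finset.Ico 1 r, ((ctM r i : ℚ) - i)
      = ∑ i ∈ Finset.Ico 1 r, ((i : ℚ) * ((r : ℚ) - 1) + (2 - (r : ℚ))) := by
    refine Finset.sum_congr rfl fun i hi => ?_
    obtain ⟨h1, h2⟩ := Finset.mem_Ico.mp hi
    rw [ctM_low r i hr h1 h2]
    push_cast [h1]
    ring
  -- middle piece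
  have hS2 : ∑ i ∈ Finset.Ico r (r * r + 1), ((ctM r i : ℚ) - i)
      = ∑ i ∈ Finset.Ico r (r * r + 1),
        (((i / r : ℕ) : ℚ) + (((r : ℚ) * r + 1 - r) - (i : ℚ))) := by
    refine Finset.sum_congr rfl fun i hi => ?_
    obtain ⟨h1, h2⟩ := Finset.mem_Ico.mp hi
    rw [ctM_mid r i hr h1 (by omega)]
    have hle : r ≤ r * r + 1 := by omega
    push_cast [hle]
    ring
  rw [hS1, hS2]
  have hid : Finset.Ico 1 r = Finset.Icc 1 (r - 1) := by
    rw [← Finset.Ico_add_one_right_eq_Icc]; congr 1; omega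
  have e1 : ∑ i ∈ Finset.Ico 1 r, (i : ℚ)
      = ((r - 1 : ℕ) : ℚ) * (((r - 1 : ℕ) : ℚ) + 1) / 2 := by
    rw [hid, sum_Icc_cast]
  have e3 : ∑ i ∈ Finset.Ico 1 (r * r + 1), (i : ℚ)
      = ((r * r : ℕ) : ℚ) * (((r * r : ℕ) : ℚ) + 1) / 2 := by
    rw [Finset.Ico_add_one_right_eq_Icc, sum_Icc_cast]
  have e2 : ∑ i ∈ Finset.Ico r (r * r + 1), (i : ℚ)
      = ((r * r : ℕ) : ℚ) * (((r * r : ℕ) : ℚ) + 1) / 2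
        - ((r - 1 : ℕ) : ℚ) * (((r - 1 : ℕ) : ℚ) + 1) / 2 := by
    have hc := Finset.sum_Ico_consecutive (fun i => (i : ℚ))
      (show 1 ≤ r by omega) (show r ≤ r * r + 1 by omega)
    rw [e1, e3] at hc
    linarith
  have e4 : ∑ i ∈ Finset.Ico r (r * r + 1), ((i / r : ℕ) : ℚ)
      = ((r * (r * (r - 1)) + 2 * r : ℕ) : ℚ) / 2 := by
    have h := sum_div_Ico r hr
    have h2 : ((∑ i ∈ Finset.Ico r (r * r + 1), i / r : ℕ) : ℚ) * 2
        = ((r * (r * (r - 1)) + 2 * r : ℕ) : ℚ) := by exact_mod_cast congrArg Nat.cast h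
    rw [Nat.cast_sum] at h2
    linarith
  rw [Finset.sum_add_distrib, Finset.sum_add_distrib, ← Finset.sum_mul,
    Finset.sum_const, Finset.sum_sub_distrib, Finset.sum_const,
    Nat.card_Ico, Nat.card_Ico, e1, e2, e4]
  have hle : r ≤ r * r + 1 := by omega
  push_cast [hr, hle, nsmul_eq_mul, Nat.cast_sub hr, Nat.cast_sub hle]
  field_simp
  ring
end

section
/- For every edge e of the circus tent graph CT(r,s) (with r, s ≥ 1), there exists a red-blue coloring of the edges of K_{rs+1} - e containing no red monotone increasing path with r edges and no blue monotone increasing path with s edges. -/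
/-- There is a monotone increasing path with `ℓ` edges inside `{1,…,n}`, all of
whose edges get the value `col` under the coloring `c` and none of which is the
deleted edge `(i,j)`. -/
def MonoPathAvoiding (c : ℕ → ℕ → Bool) (col : Bool) (n ℓ i j : ℕ) : Prop :=
  ∃ v : Fin (ℓ + 1) → ℕ, StrictMono v ∧ (∀ t, 1 ≤ v t ∧ v t ≤ n) ∧
    ∀ t : Fin ℓ, (v t.castSucc ≠ i ∨ v t.succ ≠ j) ∧
      c (v t.castSucc) (v t.succ) = col

section Aux

private lemma divmod (m x y : ℕ) (h : x < y) : x % m < y % m ∨ x / m < y / m := by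
  rcases Nat.lt_or_ge (x / m) (y / m) with h' | h'
  · exact Or.inr h'
  · left
    have hd : y / m = x / m := Nat.le_antisymm h' (Nat.div_le_div_right h.le)
    have hx := Nat.mod_add_div x m
    have hy := Nat.mod_add_div y m
    rw [hd] at hy
    omega

private lemma divmod1 (m x y : ℕ) (h : x < y) :
    x % m + 1 < y % m + 1 ∨ x / m < y / m :=
  (divmod m x y h).imp (fun h' => by omega) id

private lemma divmod2 (m c x y : ℕ) (h : x < y) :
    x % m < y % m ∨ c + x / m < c + y / m :=
  (divmod m x y h).imp id (fun h' => by omega)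

private lemma tailpos (r w : ℕ) (hr : 0 < r) (hw : 0 < w) :
    0 < w % r ∨ 0 < w / r := by
  rcases Nat.eq_zero_or_pos (w % r) with h | h
  · right
    have h2 := Nat.mod_add_div w r
    rcases Nat.eq_zero_or_pos (w / r) with h3 | h3
    · rw [h, h3, Nat.mul_zero] at h2; omega
    · exact h3
  · exact Or.inl h

private lemma arith_e1 (r k : ℕ) (hr : 1 ≤ r) (hk : 1 ≤ k) :
    k * r - r + 2 = (r-1)*(k-1) + k + 1 := by
  obtain ⟨r', rfl⟩ : ∃ r', r = r'+1 := ⟨r-1, by omega⟩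
  obtain ⟨k', rfl⟩ : ∃ k', k = k'+1 := ⟨k-1, by omega⟩
  have h1 : (k'+1)*(r'+1) = r'*k' + k' + (r'+1) := by ring
  simp only [Nat.add_sub_cancel]
  omega

private lemma arith_e2 (r s k : ℕ) (hr : 1 ≤ r) (hk : 1 ≤ k) (hks : k ≤ s) :
    (r-1)*(k-1) + k + r*(s-k+1) = r*s + 1 := by
  obtain ⟨r', rfl⟩ : ∃ r', r = r'+1 := ⟨r-1, by omega⟩
  obtain ⟨k', rfl⟩ : ∃ k', k = k'+1 := ⟨k-1, by omega⟩
  obtain ⟨d, rfl⟩ : ∃ d, s = k'+1+d := ⟨s-(k'+1), by omega⟩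
  have hs1 : (k'+1+d) - (k'+1) + 1 = d+1 := by omega
  simp only [Nat.add_sub_cancel]
  rw [hs1]
  have h1 : (r'+1)*(d+1) = r'*d + r' + d + 1 := by ring
  have h2 : (r'+1)*(k'+1+d) = r'*k' + r'*d + r' + k' + d + 1 := by ring
  omega

private lemma incBound (r k s x P : ℕ) (hP : (r-1)*(k-1) = P) (hx : x < P) (hks : k ≤ s) :
    x % (r-1) + 1 ≤ r-1 ∧ x / (r-1) ≤ s-1 := by
  have hr1 : 0 < r - 1 := by
    rcases Nat.eq_zero_or_pos (r-1) with h | h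
    · rw [h, Nat.zero_mul] at hP; omega
    · exact h
  constructor
  · exact Nat.succ_le_of_lt (Nat.mod_lt _ hr1)
  · have hd : x / (r-1) < k-1 := Nat.div_lt_of_lt_mul (by rw [hP]; exact hx)
    have hk1 : k - 1 ≤ s := by omega
    exact Nat.le_pred_of_lt (lt_of_lt_of_le hd hk1)

private lemma tailBound (r s k w Q : ℕ) (hQ : r*(s-k+1) = Q) (hw : w < Q)
    (hr : 0 < r) (hk : 1 ≤ k) (hks : k ≤ s) :
    w % r ≤ r-1 ∧ k-1 + w / r ≤ s-1 := by
  constructor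
  · exact Nat.le_pred_of_lt (Nat.mod_lt _ hr)
  · have hd : w / r < s-k+1 := Nat.div_lt_of_lt_mul (by rw [hQ]; exact hw)
    have hd' : w / r ≤ s-k := by omega
    calc k-1 + w/r ≤ k-1 + (s-k) := Nat.add_le_add_left hd' _
      _ ≤ s-1 := by omega

private lemma mono_accum {ℓ : ℕ} (f : Fin (ℓ+1) → ℕ)
    (h : ∀ t : Fin ℓ, f t.castSucc < f t.succ) :
    f 0 + ℓ ≤ f (Fin.last ℓ) := by
  have key : ∀ m, (hm : m ≤ ℓ) → f 0 + m ≤ f ⟨m, Nat.lt_succ_of_le hm⟩ := by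
    intro m
    induction m with
    | zero => intro _; simp
    | succ n ih =>
      intro hm
      have h1 := ih (Nat.le_of_succ_le hm)
      have h2 := h ⟨n, hm⟩
      have e1 : (⟨n, hm⟩ : Fin ℓ).castSucc
          = ⟨n, Nat.lt_succ_of_le (Nat.le_of_succ_le hm)⟩ := rfl
      have e2 : (⟨n, hm⟩ : Fin ℓ).succ = ⟨n+1, Nat.lt_succ_of_le hm⟩ := rfl
      rw [e1, e2] at h2
      omega
  exact key ℓ (le_refl ℓ)

/-- There are functions `a`, `b` with `a ≤ r-1`, `b ≤ s-1` on `{1,…,n}` such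
that for every `u < v` in range other than `(i,j)`, `a` or `b` strictly
increases. -/
def Spec (n r s i j : ℕ) : Prop :=
  ∃ a b : ℕ → ℕ,
    (∀ v, 1 ≤ v → v ≤ n → a v ≤ r-1 ∧ b v ≤ s-1) ∧
    (∀ u v, 1 ≤ u → u < v → v ≤ n → ¬(u = i ∧ v = j) → a u < a v ∨ b u < b v)

private lemma spec_swap (n r s i j : ℕ) (h : Spec n s r i j) : Spec n r s i j := by
  obtain ⟨a, b, h1, h2⟩ := h
  exact ⟨b, a, fun v hv hv' => ⟨(h1 v hv hv').2, (h1 v hv hv').1⟩,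
    fun u v hu huv hv hne => (h2 u v hu huv hv hne).symm⟩

private lemma spec_reflect (n r s i j : ℕ) (hi : 1 ≤ i) (hij : i < j) (hj : j ≤ n)
    (h : Spec n r s (n+1-j) (n+1-i)) : Spec n r s i j := by
  obtain ⟨a, b, h1, h2⟩ := h
  refine ⟨fun v => (r-1) - a (n+1-v), fun v => (s-1) - b (n+1-v),
    fun v _ _ => ⟨Nat.sub_le _ _, Nat.sub_le _ _⟩, ?_⟩
  intro u v hu huv hv hne
  have hne' : ¬(n+1-v = n+1-j ∧ n+1-u = n+1-i) := by
    intro ⟨e1, e2⟩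
    exact hne ⟨by omega, by omega⟩
  have hd := h2 (n+1-v) (n+1-u) (by omega) (by omega) (by omega) hne'
  have r1 := h1 (n+1-v) (by omega) (by omega)
  have r2 := h1 (n+1-u) (by omega) (by omega)
  dsimp only
  omega

set_option maxHeartbeats 3200000 in
private lemma spec_core (r s k i j : ℕ) (hr : 1 ≤ r) (hk1 : 1 ≤ k) (hks : k ≤ s)
    (hki : k ≤ i) (hij : i < j) (hj : j ≤ k*r - r + 2) : Spec (r*s+1) r s i j := by
  obtain ⟨P, hP⟩ : ∃ P, (r-1)*(k-1) = P := ⟨_, rfl⟩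
  obtain ⟨Q, hQ⟩ : ∃ Q, r*(s-k+1) = Q := ⟨_, rfl⟩
  obtain ⟨M, hM⟩ : ∃ M, r*s = M := ⟨_, rfl⟩
  have e1 := arith_e1 r k hr hk1
  have e2 := arith_e2 r s k hr hk1 hks
  rw [hP] at e1
  rw [hP, hQ, hM] at e2
  rw [e1] at hj
  set B := P + k + 1 with hB
  refine ⟨fun v => if v < k then 0 else if v < i then (v-k) % (r-1) + 1
      else if v = i then 0 else if v < j then (v-k-1) % (r-1) + 1
      else if v = j then 0 else if v ≤ B then (v-k-2) % (r-1) + 1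
      else (v - B) % r,
    fun v => if v < k then v-1 else if v < i then (v-k) / (r-1)
      else if v = i then k-1 else if v < j then (v-k-1) / (r-1)
      else if v = j then k-1 else if v ≤ B then (v-k-2) / (r-1)
      else k-1 + (v - B) / r, ?_, ?_⟩
  · intro v h1 h2
    rw [hM] at h2
    dsimp only
    split_ifs
    · exact ⟨Nat.zero_le _, by omega⟩
    · exact incBound r k s _ P hP (by omega) hks
    · exact ⟨Nat.zero_le _, by omega⟩
    · exact incBound r k s _ P hP (by omega) hks
    · exact ⟨Nat.zero_le _, by omega⟩
    · exact incBound r k s _ P hP (by omega) hks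
    · exact tailBound r s k _ Q hQ (by omega) (by omega) hk1 hks
  · intro u v hu huv hv hne
    rw [hM] at hv
    dsimp only
    split_ifs <;>
      first
      | (exfalso; omega)
      | (left; exact Nat.succ_pos _)
      | (right; omega)
      | (exact divmod1 (r-1) _ _ (by omega))
      | (exact divmod2 r (k-1) _ _ (by omega))
      | (right; exact Nat.div_lt_of_lt_mul (by rw [hP]; omega))
      | (right; exact lt_of_lt_of_le (Nat.div_lt_of_lt_mul (by rw [hP]; omega))
          (Nat.le_add_right _ _))
      | (right; exact lt_of_lt_of_le (by omega) (Nat.le_add_right _ _))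
      | (exact (tailpos r _ (by omega) (by omega)).imp id
          (fun h => Nat.lt_add_of_pos_right h))

private lemma spec_to_goal (r s i j : ℕ) (hr : 1 ≤ r) (hs : 1 ≤ s)
    (h : Spec (r*s+1) r s i j) :
    ∃ c : ℕ → ℕ → Bool,
      ¬ MonoPathAvoiding c true (r * s + 1) r i j ∧
      ¬ MonoPathAvoiding c false (r * s + 1) s i j := by
  obtain ⟨a, b, hrange, hmono⟩ := h
  refine ⟨fun u v => decide (a u < a v), ?_, ?_⟩
  · rintro ⟨v, hmv, hin, hedge⟩
    have hstep : ∀ t : Fin r, a (v t.castSucc) < a (v t.succ) := by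
      intro t
      exact of_decide_eq_true (hedge t).2
    have hacc := mono_accum (fun t => a (v t)) hstep
    have hb := (hrange (v (Fin.last r)) (hin _).1 (hin _).2).1
    omega
  · rintro ⟨v, hmv, hin, hedge⟩
    have hstep : ∀ t : Fin s, b (v t.castSucc) < b (v t.succ) := by
      intro t
      have hna : ¬ (a (v t.castSucc) < a (v t.succ)) :=
        of_decide_eq_false (hedge t).2
      have hne : ¬(v t.castSucc = i ∧ v t.succ = j) := by
        rcases (hedge t).1 with h' | h'
        · exact fun hc => h' hc.1
        · exact fun hc => h' hc.2
      have := hmono (v t.castSucc) (v t.succ) (hin _).1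
        (hmv (Fin.castSucc_lt_succ : t.castSucc < t.succ)) (hin _).2 hne
      omega
    have hacc := mono_accum (fun t => b (v t)) hstep
    have hb := (hrange (v (Fin.last s)) (hin _).1 (hin _).2).2
    omega

private lemma refl_bounds (r s k i j : ℕ) (hr : 1 ≤ r) (hk1 : 1 ≤ k) (hks : k ≤ s)
    (h1 : r*s - k*r + r ≤ i) (h2 : i < j) (h3 : j ≤ r*s + 2 - k) :
    1 ≤ i ∧ i < j ∧ j ≤ r*s+1 ∧ k ≤ r*s+2-j ∧ r*s+2-j < r*s+2-i ∧
      r*s+2-i ≤ k*r - r + 2 := by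
  have hkr : k*r ≤ r*s := by
    calc k*r ≤ s*r := Nat.mul_le_mul_right _ hks
      _ = r*s := Nat.mul_comm s r
  have hrk : r ≤ k*r := Nat.le_mul_of_pos_left r hk1
  omega

end Aux


/-- For every edge `e = ij` of `CT(r,s)`, the graph `K_{rs+1} - e` has a
red-blue edge coloring with no red monotone increasing path with `r` edges and
no blue monotone increasing path with `s` edges. -/
theorem ctEdge_necessary (r s i j : ℕ) (hr : 1 ≤ r) (hs : 1 ≤ s)
    (hij : i < j) (he : ctEdge r s i j) :
    ∃ c : ℕ → ℕ → Bool,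
      ¬ MonoPathAvoiding c true (r * s + 1) r i j ∧
      ¬ MonoPathAvoiding c false (r * s + 1) s i j := by
  have key : Spec (r*s+1) r s i j := by
    rcases he with ⟨k, hk, hc⟩ | ⟨k, hk, hc⟩ <;> rw [Finset.mem_Icc] at hk
    · rcases hc with ⟨h1, h2, h3⟩ | ⟨h1, h2, h3⟩
      · exact spec_core r s k i j hr hk.1 hk.2 h1 h2 h3
      · obtain ⟨c1, c2, c3, c4, c5, c6⟩ := refl_bounds r s k i j hr hk.1 hk.2 h1 h2 h3
        exact spec_reflect (r*s+1) r s i j c1 c2 c3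
          (spec_core r s k (r*s+1+1-j) (r*s+1+1-i) hr hk.1 hk.2 (by omega) (by omega) (by omega))
    · rcases hc with ⟨h1, h2, h3⟩ | ⟨h1, h2, h3⟩
      · have h' := spec_core s r k i j hs hk.1 hk.2 h1 h2 h3
        rw [Nat.mul_comm s r] at h'
        exact spec_swap _ _ _ _ _ h'
      · rw [Nat.mul_comm r s] at h1 h3
        obtain ⟨c1, c2, c3, c4, c5, c6⟩ := refl_bounds s r k i j hs hk.1 hk.2 h1 h2 h3
        have h' := spec_core s r k (s*r+1+1-j) (s*r+1+1-i) hs hk.1 hk.2 (by omega) (by omega) (by omega)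
        have h2' := spec_reflect (s*r+1) s r i j c1 c2 c3 h'
        rw [Nat.mul_comm s r] at h2'
        exact spec_swap _ _ _ _ _ h2'
  exact spec_to_goal r s i j hr hs key
end
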